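/- Let n ≥ 1 and y ∈ ℝⁿ. For 1 ≤ k ≤ n define γ_k(y) = sup{c > 0 : for every T > 0 there exists t = (t₁,…,t_n), tᵢ ≥ 0, with t := ∑ᵢtᵢ ≥ T such that g_t u_y(ℤ^{n+1}_k) contains a nonzero vector of supremum norm ≤ e^{−c·t}}, with sup ∅ = 0 and the supremum taken in [0,∞]. Then, in the extended reals and with the convention that (n + n·γ_k(y))/(1 − k·γ_k(y)) = +∞ whenever γ_k(y) ≥ 1/k, one has ω×(y) = max_{1≤k≤n} (n + n·γ_k(y))/(1 − k·γ_k(y)). -/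

import Mathlib

open Filter MeasureTheory Metric Set BigOperators

/-- Π×(q) = ∏_{i : qᵢ ≠ 0} |qᵢ| (empty product = 1). -/
noncomputable def prodTimes {n : ℕ} (q : Fin n → ℤ) : ℝ :=
  ∏ i, if q i = 0 then 1 else |(q i : ℝ)|

/-- Multiplicative Diophantine exponent ω×(y): the sup (in the extended reals) of all
v ∈ ℝ such that there are infinitely many q ∈ ℤⁿ with |q·y + p| < Π×(q)^{-v/n}
for some p ∈ ℤ. -/
noncomputable def omegaT {n : ℕ} (y : Fin n → ℝ) : EReal :=
  sSup {w : EReal | ∃ v : ℝ, w = (v : EReal) ∧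
    {q : Fin n → ℤ | ∃ p : ℤ, |(∑ i, (q i : ℝ) * y i) + (p : ℝ)| <
      (prodTimes q) ^ (-(v / (n : ℝ)))}.Infinite}

/-- γ_k(y): the supremum (in [0, ∞], here realized inside EReal with 0 inserted so
that sup ∅ = 0) of all c > 0 such that for arbitrarily large ∑ tᵢ the lattice
g_t u_y (ℤ^{n+1}_k) contains a nonzero vector of sup norm ≤ e^{-c ∑ tᵢ}. -/
noncomputable def gammaK {n : ℕ} (y : Fin n → ℝ) (k : ℕ) : EReal :=
  sSup (insert (0 : EReal) {w : EReal | ∃ c : ℝ, w = (c : EReal) ∧ 0 < c ∧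
    ∀ T > (0:ℝ), ∃ t : Fin n → ℝ, (∀ i, 0 ≤ t i) ∧ T ≤ ∑ i, t i ∧
      ∃ (p : ℤ) (q : Fin n → ℤ),
        (Finset.univ.filter fun i => q i ≠ 0).card = k ∧
        ¬(p = 0 ∧ q = 0) ∧
        Real.exp (∑ i, t i) * |(p : ℝ) + ∑ i, (q i : ℝ) * y i| ≤
          Real.exp (-c * ∑ i, t i) ∧
        ∀ i, Real.exp (-(t i)) * |(q i : ℝ)| ≤ Real.exp (-c * ∑ i, t i)})

/-!
Sort the approximations counted by ω×(y) by the number k of nonzero entries of q. If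
|q·y + p| < Π×(q)^(-v/n) with v > n, then putting tᵢ = log|qᵢ| + cτ on the support of q, where
τ = log Π×(q) / (1 - kc), shrinks every coordinate of g_t u_y (p, q) to at most e^(-cτ) as soon
as v ≥ n(1 + c)/(1 - kc). Conversely, a vector of g_t u_y ℤ^{n+1}_k of norm at most e^(-cτ)
gives |q·y + p| ≤ e^(-(1+c)τ) with Π×(q) ≤ e^((1-kc)τ), an approximation of every exponent
below n(1 + c)/(1 - kc). Unless 1, y₁, …, yₙ satisfy an integer relation (and then every
exponent occurs), arbitrarily small values of |q·y + p| with q ≠ 0 need infinitely many q; this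
turns both estimates into statements about ω×(y), and forces kc < 1, since Π×(q) ≤ 1 leaves
only finitely many q. Exponents v ≤ n always occur, by Dirichlet's pigeonhole argument.
-/

section

variable {n : ℕ}

theorem one_le_abs_intCast {m : ℤ} (h : m ≠ 0) : (1 : ℝ) ≤ |(m : ℝ)| := by
  exact_mod_cast Int.one_le_abs h

theorem one_le_ite_abs_intCast (m : ℤ) : (1 : ℝ) ≤ if m = 0 then 1 else |(m : ℝ)| := by
  split_ifs with h
  exacts [le_rfl, one_le_abs_intCast h]

theorem one_le_prodTimes (q : Fin n → ℤ) : 1 ≤ prodTimes q :=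
  Finset.one_le_prod fun i _ => one_le_ite_abs_intCast (q i)

theorem prodTimes_pos (q : Fin n → ℤ) : 0 < prodTimes q :=
  one_pos.trans_le (one_le_prodTimes q)

theorem abs_le_prodTimes (q : Fin n → ℤ) (i : Fin n) : |(q i : ℝ)| ≤ prodTimes q :=
  calc |(q i : ℝ)| ≤ if q i = 0 then 1 else |(q i : ℝ)| := by split_ifs with h <;> simp [h]
    _ = ∏ j ∈ {i}, if q j = 0 then 1 else |(q j : ℝ)| := (Finset.prod_singleton _ _).symm
    _ ≤ prodTimes q := Finset.prod_le_prod_of_subset_of_one_le (Finset.subset_univ _)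
      (fun j _ => zero_le_one.trans (one_le_ite_abs_intCast (q j)))
      fun j _ _ => one_le_ite_abs_intCast (q j)

theorem prodTimes_le_pow {N : ℕ} (hN : 1 ≤ N) {q : Fin n → ℤ} (hq : ∀ i, |q i| ≤ N) :
    prodTimes q ≤ (N : ℝ) ^ n := by
  calc prodTimes q ≤ ∏ _i : Fin n, (N : ℝ) := Finset.prod_le_prod
        (fun i _ => zero_le_one.trans (one_le_ite_abs_intCast (q i))) fun i _ => by
          split_ifs with h
          · exact_mod_cast hN
          · exact_mod_cast hq i
    _ = (N : ℝ) ^ n := by simp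

theorem log_prodTimes (q : Fin n → ℤ) :
    Real.log (prodTimes q) = ∑ i, if q i = 0 then 0 else Real.log |(q i : ℝ)| := by
  rw [prodTimes, Real.log_prod fun i _ => by split_ifs with h <;> simp [h]]
  exact Finset.sum_congr rfl fun i _ => by split_ifs <;> simp

theorem finite_setOf_prodTimes_le (B : ℝ) : {q : Fin n → ℤ | prodTimes q ≤ B}.Finite := by
  refine (Set.finite_Icc (-fun _ => ⌈B⌉) fun _ => ⌈B⌉).subset fun q hq => ?_
  have : ∀ i, |q i| ≤ ⌈B⌉ := fun i => by
    have := (abs_le_prodTimes q i).trans (hq.trans (Int.le_ceil B))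
    exact_mod_cast this
  exact ⟨fun i => (abs_le.1 (this i)).1, fun i => (abs_le.1 (this i)).2⟩

noncomputable def omegaOfGamma (n k : ℕ) (c : ℝ) : ℝ := (n + n * c) / (1 - k * c)

noncomputable def gammaOfOmega (n k : ℕ) (v : ℝ) : ℝ := (v - n) / (k * v + n)

noncomputable def omegaOfGammaK (n k : ℕ) (γ : EReal) : EReal :=
  if γ < (((1 : ℝ) / (k : ℝ) : ℝ) : EReal) then (omegaOfGamma n k γ.toReal : EReal) else ⊤

section Transfer

variable {k : ℕ} {v : ℝ} {γ : EReal}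

theorem gammaOfOmega_nonneg (hv : n ≤ v) : 0 ≤ gammaOfOmega n k v :=
  div_nonneg (by linarith) (by have : (0 : ℝ) ≤ v := n.cast_nonneg.trans hv; positivity)

theorem gammaOfOmega_pos (hn : 0 < n) (hv : n < v) : 0 < gammaOfOmega n k v :=
  div_pos (by linarith) (by have : (0 : ℝ) < v := n.cast_nonneg.trans_lt hv; positivity)

theorem mul_gammaOfOmega_lt_one (hn : 0 < n) (hv : n ≤ v) : k * gammaOfOmega n k v < 1 := by
  have : (0 : ℝ) ≤ v := n.cast_nonneg.trans hv
  rw [gammaOfOmega, mul_div_assoc', div_lt_one (by positivity)]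
  nlinarith [(Nat.cast_pos.2 hn : (0 : ℝ) < n), (k.cast_nonneg : (0 : ℝ) ≤ k)]

theorem omegaOfGamma_gammaOfOmega (hn : 0 < n) (hv : n ≤ v) :
    omegaOfGamma n k (gammaOfOmega n k v) = v := by
  have : (0 : ℝ) ≤ v := n.cast_nonneg.trans hv
  have h1 : (k : ℝ) * v + n ≠ 0 := by positivity
  have h2 : (n : ℝ) * (k + 1) ≠ 0 := by positivity
  rw [omegaOfGamma, gammaOfOmega]
  have h3 : 1 - k * ((v - n) / (k * v + n)) = n * (k + 1) / (k * v + n) := by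
    field_simp
    ring
  rw [h3, div_eq_iff (div_ne_zero h2 h1)]
  field_simp
  ring

theorem lt_omegaOfGamma_iff {c : ℝ} (hn : 0 < n) (hkc : k * c < 1) (hv : n ≤ v) :
    v < omegaOfGamma n k c ↔ gammaOfOmega n k v < c := by
  have : (0 : ℝ) ≤ v := n.cast_nonneg.trans hv
  rw [omegaOfGamma, gammaOfOmega, lt_div_iff₀ (by linarith), div_lt_iff₀ (by positivity)]
  constructor <;> intro <;> linarith

theorem le_omegaOfGamma_iff {c : ℝ} (hn : 0 < n) (hkc : k * c < 1) (hv : n ≤ v) :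
    v ≤ omegaOfGamma n k c ↔ gammaOfOmega n k v ≤ c := by
  have : (0 : ℝ) ≤ v := n.cast_nonneg.trans hv
  rw [omegaOfGamma, gammaOfOmega, le_div_iff₀ (by linarith), div_le_iff₀ (by positivity)]
  constructor <;> intro <;> linarith

theorem omegaOfGammaK_of_lt (hk : 0 < k) (hγ : 0 ≤ γ) (h : γ < (((1 : ℝ) / k : ℝ) : EReal)) :
    ∃ g : ℝ, γ = g ∧ k * g < 1 ∧ omegaOfGammaK n k γ = omegaOfGamma n k g := by
  refine ⟨γ.toReal, (EReal.coe_toReal h.ne_top (EReal.bot_lt_zero.trans_le hγ).ne').symm, ?_,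
    if_pos h⟩
  rw [← lt_div_iff₀' (Nat.cast_pos.2 hk), ← EReal.coe_lt_coe_iff,
    EReal.coe_toReal h.ne_top (EReal.bot_lt_zero.trans_le hγ).ne']
  exact h

theorem coe_lt_omegaOfGammaK_iff (hn : 0 < n) (hk : 0 < k) (hγ : 0 ≤ γ) (hv : n ≤ v) :
    (v : EReal) < omegaOfGammaK n k γ ↔ (gammaOfOmega n k v : EReal) < γ := by
  by_cases h : γ < (((1 : ℝ) / k : ℝ) : EReal)
  · obtain ⟨g, rfl, hkg, he⟩ := omegaOfGammaK_of_lt (n := n) hk hγ h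
    rw [he, EReal.coe_lt_coe_iff, EReal.coe_lt_coe_iff]
    exact lt_omegaOfGamma_iff hn hkg hv
  · rw [omegaOfGammaK, if_neg h]
    refine iff_of_true (EReal.coe_lt_top v) ((EReal.coe_lt_coe_iff.2 ?_).trans_le (not_lt.1 h))
    rw [lt_div_iff₀' (Nat.cast_pos.2 hk)]
    exact mul_gammaOfOmega_lt_one hn hv

theorem coe_le_omegaOfGammaK_iff (hn : 0 < n) (hk : 0 < k) (hγ : 0 ≤ γ) (hv : n ≤ v) :
    (v : EReal) ≤ omegaOfGammaK n k γ ↔ (gammaOfOmega n k v : EReal) ≤ γ := by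
  by_cases h : γ < (((1 : ℝ) / k : ℝ) : EReal)
  · obtain ⟨g, rfl, hkg, he⟩ := omegaOfGammaK_of_lt (n := n) hk hγ h
    rw [he, EReal.coe_le_coe_iff, EReal.coe_le_coe_iff]
    exact le_omegaOfGamma_iff hn hkg hv
  · rw [omegaOfGammaK, if_neg h]
    refine iff_of_true le_top ((EReal.coe_le_coe_iff.2 ?_).trans (not_lt.1 h))
    rw [le_div_iff₀' (Nat.cast_pos.2 hk)]
    exact (mul_gammaOfOmega_lt_one hn hv).le

end Transfer

def approxSet (y : Fin n → ℝ) (v : ℝ) : Set (Fin n → ℤ) :=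
  {q | ∃ p : ℤ, |(∑ i, (q i : ℝ) * y i) + (p : ℝ)| < (prodTimes q) ^ (-(v / (n : ℝ)))}

def HasIntegerRelation (y : Fin n → ℝ) : Prop :=
  ∃ q : Fin n → ℤ, q ≠ 0 ∧ ∃ p : ℤ, (∑ i, (q i : ℝ) * y i) + (p : ℝ) = 0

variable {y : Fin n → ℝ}

theorem approxSet_antitone (y : Fin n → ℝ) : Antitone (approxSet y) :=
  fun _ _ hvw _ ⟨p, hp⟩ => ⟨p, hp.trans_le (Real.rpow_le_rpow_of_exponent_le
    (one_le_prodTimes _) (neg_le_neg (div_le_div_of_nonneg_right hvw n.cast_nonneg)))⟩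

theorem mem_approxSet_of_prodTimes_le {v B : ℝ} (hv : 0 ≤ v) {q : Fin n → ℤ}
    (hB : prodTimes q ≤ B) {p : ℤ} (h : |(∑ i, (q i : ℝ) * y i) + (p : ℝ)| < B ^ (-(v / n))) :
    q ∈ approxSet y v :=
  ⟨p, h.trans_le (Real.rpow_le_rpow_of_nonpos (prodTimes_pos q) hB
    (neg_nonpos.2 (div_nonneg hv n.cast_nonneg)))⟩

theorem HasIntegerRelation.approxSet_infinite (hy : HasIntegerRelation y) (v : ℝ) :
    (approxSet y v).Infinite := by
  obtain ⟨q, hq, p, hqp⟩ := hy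
  have hinj : Function.Injective fun m : ℕ => ((m : ℤ) + 1) • q :=
    (smul_left_injective ℤ hq).comp fun a b h => by simpa using h
  refine Set.infinite_of_injective_forall_mem hinj fun m => ⟨((m : ℤ) + 1) * p, ?_⟩
  have : (∑ i, ((((m : ℤ) + 1) • q) i : ℝ) * y i) + ((((m : ℤ) + 1) * p : ℤ) : ℝ)
      = ((m : ℝ) + 1) * ((∑ i, (q i : ℝ) * y i) + p) := by
    simp only [Pi.smul_apply, smul_eq_mul, Int.cast_mul, Int.cast_add, Int.cast_natCast,
      Int.cast_one, mul_add, Finset.mul_sum, mul_assoc]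
  rw [this, hqp, mul_zero, abs_zero]
  exact Real.rpow_pos_of_pos (prodTimes_pos _) _

theorem infinite_of_forall_exists_abs_lt (hy : ¬HasIntegerRelation y) {A : Set (Fin n → ℤ)}
    (h : ∀ ε > 0, ∃ q ∈ A, q ≠ 0 ∧ ∃ p : ℤ, |(∑ i, (q i : ℝ) * y i) + (p : ℝ)| < ε) :
    A.Infinite := by
  intro hA
  have hsep : ∀ q ∈ A, ∀ᶠ ε in nhdsWithin (0 : ℝ) (Ioi 0),
      q ≠ 0 → ∀ p : ℤ, ε ≤ |(∑ i, (q i : ℝ) * y i) + (p : ℝ)| := by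
    intro q _
    by_cases hq : q = 0
    · exact Eventually.of_forall fun _ h => absurd hq h
    set x := ∑ i, (q i : ℝ) * y i
    have hx : 0 < |x - round x| := abs_pos.2 fun h0 => hy ⟨q, hq, -round x, by push_cast; linarith⟩
    filter_upwards [eventually_nhdsWithin_of_eventually_nhds (eventually_le_nhds hx)]
      with ε hε _ p
    simpa [sub_eq_add_neg] using hε.trans (round_le x (-p))
  obtain ⟨ε, hεA, hε⟩ := ((hA.eventually_all.2 hsep).and self_mem_nhdsWithin).exists
  obtain ⟨q, hqA, hq, p, hp⟩ := h ε hε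
  exact (hεA q hqA hq p).not_gt hp

theorem exists_abs_sum_mul_add_lt (hn : 0 < n) (y : Fin n → ℝ) {N : ℕ} (hN : 0 < N) :
    ∃ q : Fin n → ℤ, q ≠ 0 ∧ (∀ i, |q i| ≤ N) ∧
      ∃ p : ℤ, |(∑ i, (q i : ℝ) * y i) + (p : ℝ)| < 1 / (N : ℝ) ^ n := by
  set M : ℝ := (N : ℝ) ^ n
  have hM : 0 < M := by positivity
  let S : (Fin n → Fin (N + 1)) → ℝ := fun r => ∑ i, ((r i : ℕ) : ℝ) * y i
  have hmaps : ∀ r ∈ (Finset.univ : Finset (Fin n → Fin (N + 1))),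
      ⌊Int.fract (S r) * M⌋ ∈ Finset.Ico (0 : ℤ) (N ^ n) := fun r _ => by
    rw [Finset.mem_Ico, Int.floor_nonneg, Int.floor_lt]
    push_cast
    exact ⟨by have := Int.fract_nonneg (S r); positivity,
      mul_lt_of_lt_one_left hM (Int.fract_lt_one _)⟩
  have hcard : (Finset.Ico (0 : ℤ) (N ^ n)).card <
      (Finset.univ : Finset (Fin n → Fin (N + 1))).card := by
    simp only [Int.card_Ico, sub_zero, Finset.card_univ, Fintype.card_fun, Fintype.card_fin]
    exact_mod_cast Nat.pow_lt_pow_left N.lt_succ_self hn.ne'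
  obtain ⟨r, -, r', -, hrr', hfloor⟩ := Finset.exists_ne_map_eq_of_card_lt_of_maps_to hcard hmaps
  refine ⟨fun i => (r i : ℤ) - (r' i : ℤ), fun h => hrr' (funext fun i => Fin.ext ?_),
    fun i => abs_sub_le_iff.2 ⟨by omega, by omega⟩, ⌊S r'⌋ - ⌊S r⌋, ?_⟩
  · have := congrFun h i
    simp only [Pi.zero_apply, sub_eq_zero] at this
    exact_mod_cast this
  · have hx : (∑ i, (((r i : ℤ) - (r' i : ℤ) : ℤ) : ℝ) * y i) + ((⌊S r'⌋ - ⌊S r⌋ : ℤ) : ℝ)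
        = Int.fract (S r) - Int.fract (S r') := by
      simp only [Int.fract, S, Int.cast_sub, Int.cast_natCast, sub_mul, Finset.sum_sub_distrib]
      ring
    rw [hx, lt_div_iff₀ hM, ← abs_of_pos hM, ← abs_mul, sub_mul]
    exact Int.abs_sub_lt_one_of_floor_eq_floor hfloor

theorem approxSet_infinite_of_le (hn : 0 < n) (hy : ¬HasIntegerRelation y) {v : ℝ}
    (hv : v ≤ n) : (approxSet y v).Infinite := by
  refine Set.Infinite.mono (approxSet_antitone y (le_max_left v 0)) ?_
  have hw0 : 0 ≤ max v 0 := le_max_right v 0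
  have hwn : max v 0 ≤ n := max_le hv n.cast_nonneg
  refine infinite_of_forall_exists_abs_lt hy fun ε hε => ?_
  obtain ⟨N, hN⟩ := exists_nat_gt ε⁻¹
  have hN0 : 0 < N := by exact_mod_cast (inv_pos.2 hε).trans hN
  have hN1 : (1 : ℝ) ≤ N := by exact_mod_cast hN0
  obtain ⟨q, hq, hqN, p, hp⟩ := exists_abs_sum_mul_add_lt hn y hN0
  refine ⟨q, mem_approxSet_of_prodTimes_le hw0 (prodTimes_le_pow hN0 hqN) (hp.trans_le ?_),
    hq, p, hp.trans_le ?_⟩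
  · rw [← Real.rpow_natCast, ← Real.rpow_mul (by positivity), one_div,
      ← Real.rpow_neg (by positivity)]
    refine Real.rpow_le_rpow_of_exponent_le hN1 ?_
    rw [mul_neg, mul_div_cancel₀ _ (by positivity)]
    exact neg_le_neg hwn
  · calc 1 / (N : ℝ) ^ n ≤ 1 / N := one_div_le_one_div_of_le (by positivity)
          (le_self_pow₀ hN1 hn.ne')
      _ ≤ ε := by rw [one_div]; exact inv_le_of_inv_le₀ hε hN.le

theorem ne_zero_of_card_support_eq {q : Fin n → ℤ} {k : ℕ} (hk : 1 ≤ k)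
    (hq : (Finset.univ.filter fun i => q i ≠ 0).card = k) : q ≠ 0 := by
  rintro rfl
  simp only [Pi.zero_apply, ne_eq, not_true_eq_false, Finset.filter_false,
    Finset.card_empty] at hq
  omega

theorem sum_ite_zero_const (q : Fin n → ℤ) (a : ℝ) :
    ∑ i, (if q i = 0 then 0 else a) = (Finset.univ.filter fun i => q i ≠ 0).card * a := by
  simp [Finset.sum_ite]

theorem exists_balancing_time {k : ℕ} {c : ℝ} (hc : 0 ≤ c) (hkc : k * c < 1) {q : Fin n → ℤ}
    (hq : (Finset.univ.filter fun i => q i ≠ 0).card = k) :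
    ∃ t : Fin n → ℝ, (∀ i, 0 ≤ t i) ∧ (1 - k * c) * ∑ i, t i = Real.log (prodTimes q) ∧
      ∀ i, Real.exp (-t i) * |(q i : ℝ)| ≤ Real.exp (-c * ∑ i, t i) := by
  set τ := Real.log (prodTimes q) / (1 - k * c)
  have hτ : 0 ≤ τ := div_nonneg (Real.log_nonneg (one_le_prodTimes q)) (by linarith)
  have hL : (1 - k * c) * τ = Real.log (prodTimes q) := by
    simp only [τ]
    field_simp [(by linarith : 1 - k * c ≠ 0)]
  set t : Fin n → ℝ := fun i => if q i = 0 then 0 else Real.log |(q i : ℝ)| + c * τ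
  have hsum : ∑ i, t i = τ := by
    have : ∀ i, t i = (if q i = 0 then 0 else Real.log |(q i : ℝ)|) +
        if q i = 0 then 0 else c * τ := fun i => by simp only [t]; split_ifs <;> simp
    rw [Finset.sum_congr rfl fun i _ => this i, Finset.sum_add_distrib, ← log_prodTimes,
      sum_ite_zero_const, hq]
    linarith
  refine ⟨t, fun i => ?_, ?_, fun i => ?_⟩
  · simp only [t]
    split_ifs with h
    exacts [le_rfl, add_nonneg (Real.log_nonneg (one_le_abs_intCast h)) (by positivity)]
  · rw [hsum, hL]
  · rw [hsum]
    simp only [t]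
    split_ifs with h
    · rw [h, Int.cast_zero, abs_zero, mul_zero]
      positivity
    · have hq0 : 0 < |(q i : ℝ)| := abs_pos.2 (Int.cast_ne_zero.2 h)
      rw [neg_add, Real.exp_add, Real.exp_neg, Real.exp_log hq0, neg_mul]
      exact le_of_eq (by field_simp)

def HasShrinkingVectors (y : Fin n → ℝ) (k : ℕ) (c : ℝ) : Prop :=
  ∀ T > (0:ℝ), ∃ t : Fin n → ℝ, (∀ i, 0 ≤ t i) ∧ T ≤ ∑ i, t i ∧
    ∃ (p : ℤ) (q : Fin n → ℤ),
      (Finset.univ.filter fun i => q i ≠ 0).card = k ∧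
      ¬(p = 0 ∧ q = 0) ∧
      Real.exp (∑ i, t i) * |(p : ℝ) + ∑ i, (q i : ℝ) * y i| ≤
        Real.exp (-c * ∑ i, t i) ∧
      ∀ i, Real.exp (-(t i)) * |(q i : ℝ)| ≤ Real.exp (-c * ∑ i, t i)

theorem HasShrinkingVectors.exists_approx {k : ℕ} {c : ℝ} (h : HasShrinkingVectors y k c)
    (hc : 0 < c) {ε : ℝ} (hε : 0 < ε) :
    ∃ τ > 0, ∃ q : Fin n → ℤ, (Finset.univ.filter fun i => q i ≠ 0).card = k ∧
      prodTimes q ≤ Real.exp ((1 - k * c) * τ) ∧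
      ∃ p : ℤ, |(∑ i, (q i : ℝ) * y i) + (p : ℝ)| ≤ Real.exp (-(1 + c) * τ) ∧
        Real.exp (-(1 + c) * τ) < ε := by
  have hlim : Tendsto (fun T => Real.exp (-(1 + c) * T)) atTop (nhds 0) :=
    Real.tendsto_exp_atBot.comp (tendsto_id.const_mul_atTop_of_neg (by linarith))
  obtain ⟨T, hT0, hTε⟩ :=
    ((eventually_gt_atTop 0).and (hlim.eventually (gt_mem_nhds hε))).exists
  obtain ⟨t, ht0, hTt, p, q, hq, -, hmain, hcoord⟩ := h T hT0
  set τ := ∑ i, t i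
  refine ⟨τ, hT0.trans_le hTt, q, hq, ?_, p, ?_,
    (Real.exp_le_exp.2 (by nlinarith)).trans_lt hTε⟩
  · rw [← Real.log_le_iff_le_exp (prodTimes_pos q), log_prodTimes]
    calc ∑ i, (if q i = 0 then 0 else Real.log |(q i : ℝ)|)
        ≤ ∑ i, (t i - if q i = 0 then 0 else c * τ) := Finset.sum_le_sum fun i _ => ?_
      _ = (1 - k * c) * τ := by rw [Finset.sum_sub_distrib, sum_ite_zero_const, hq]; ring
    split_ifs with hi
    · simpa using ht0 i
    · rw [Real.log_le_iff_le_exp (abs_pos.2 (Int.cast_ne_zero.2 hi))]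
      calc |(q i : ℝ)| = Real.exp (t i) * (Real.exp (-t i) * |(q i : ℝ)|) := by
            rw [← mul_assoc, ← Real.exp_add, add_neg_cancel, Real.exp_zero, one_mul]
        _ ≤ Real.exp (t i) * Real.exp (-c * τ) := by gcongr; exact hcoord i
        _ = Real.exp (t i - c * τ) := by rw [← Real.exp_add]; ring_nf
  · rw [add_comm, show -(1 + c) * τ = -c * τ - τ by ring, Real.exp_sub,
      le_div_iff₀ (Real.exp_pos τ), mul_comm]
    exact hmain

theorem HasShrinkingVectors.mul_lt_one (hy : ¬HasIntegerRelation y) {k : ℕ} (hk : 1 ≤ k)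
    {c : ℝ} (hc : 0 < c) (h : HasShrinkingVectors y k c) : k * c < 1 := by
  by_contra! hkc
  refine (finite_setOf_prodTimes_le 1).not_infinite
    (infinite_of_forall_exists_abs_lt hy fun ε hε => ?_)
  obtain ⟨τ, hτ, q, hq, hB, p, hp, hpε⟩ := h.exists_approx hc hε
  exact ⟨q, hB.trans (Real.exp_le_one_iff.2 (mul_nonpos_of_nonpos_of_nonneg (by linarith) hτ.le)),
    ne_zero_of_card_support_eq hk hq, p, hp.trans_lt hpε⟩

theorem HasShrinkingVectors.approxSet_infinite (hn : 0 < n) (hy : ¬HasIntegerRelation y)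
    {k : ℕ} (hk : 1 ≤ k) {c : ℝ} (hc : 0 < c) (h : HasShrinkingVectors y k c) {v : ℝ}
    (hv : v < omegaOfGamma n k c) : (approxSet y v).Infinite := by
  have hkc : 0 < 1 - k * c := by linarith [h.mul_lt_one hy hk hc]
  have hw : max v 0 < omegaOfGamma n k c := max_lt hv (div_pos (by positivity) hkc)
  refine Set.Infinite.mono (approxSet_antitone y (le_max_left v 0))
    (infinite_of_forall_exists_abs_lt hy fun ε hε => ?_)
  obtain ⟨τ, hτ, q, hq, hB, p, hp, hpε⟩ := h.exists_approx hc hε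
  refine ⟨q, mem_approxSet_of_prodTimes_le (le_max_right v 0) hB (hp.trans_lt ?_),
    ne_zero_of_card_support_eq hk hq, p, hp.trans_lt hpε⟩
  have : (1 - k * c) * (max v 0 / n) < 1 + c := by
    rw [omegaOfGamma, lt_div_iff₀ hkc] at hw
    rw [mul_div_assoc', div_lt_iff₀ (by positivity)]
    linarith
  rw [← Real.exp_mul, Real.exp_lt_exp]
  nlinarith

theorem hasShrinkingVectors_of_infinite (hn : 0 < n) {k : ℕ} (hk : 1 ≤ k) {c : ℝ} (hc : 0 < c)
    (hkc : k * c < 1) {v : ℝ} (hv : omegaOfGamma n k c ≤ v)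
    (hinf : {q ∈ approxSet y v | (Finset.univ.filter fun i => q i ≠ 0).card = k}.Infinite) :
    HasShrinkingVectors y k c := by
  have hkc' : 0 < 1 - k * c := by linarith
  intro T hT
  obtain ⟨q, ⟨⟨p, hp⟩, hq⟩, hqT⟩ :=
    (hinf.sdiff (finite_setOf_prodTimes_le (Real.exp ((1 - k * c) * T)))).nonempty
  obtain ⟨t, ht0, htq, hcoord⟩ := exists_balancing_time hc.le hkc hq
  set τ := ∑ i, t i
  have hTτ : T ≤ τ := by
    have : (1 - k * c) * T < (1 - k * c) * τ := by
      rw [htq, Real.lt_log_iff_exp_lt (prodTimes_pos q)]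
      exact not_le.1 hqT
    exact (lt_of_mul_lt_mul_left this hkc'.le).le
  refine ⟨t, ht0, hTτ, p, q, hq, fun h => ne_zero_of_card_support_eq hk hq h.2, ?_, hcoord⟩
  have hcv : 1 + c ≤ v / n * (1 - k * c) := by
    rw [omegaOfGamma, div_le_iff₀ hkc'] at hv
    rw [div_mul_eq_mul_div, le_div_iff₀ (by positivity)]
    linarith
  have hτv : (1 + c) * τ ≤ v / n * Real.log (prodTimes q) := by
    rw [← htq, ← mul_assoc]
    exact mul_le_mul_of_nonneg_right hcv (hT.le.trans hTτ)
  calc Real.exp τ * |(p : ℝ) + ∑ i, (q i : ℝ) * y i|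
      ≤ Real.exp τ * prodTimes q ^ (-(v / n)) := by rw [add_comm]; gcongr
    _ = Real.exp (τ - v / n * Real.log (prodTimes q)) := by
      rw [Real.rpow_def_of_pos (prodTimes_pos q), ← Real.exp_add]; ring_nf
    _ ≤ Real.exp (-c * τ) := Real.exp_le_exp.2 (by linarith)

theorem exists_infinite_card_support_eq {A : Set (Fin n → ℤ)} (hA : A.Infinite) :
    ∃ k ∈ Finset.Icc 1 n,
      {q ∈ A | (Finset.univ.filter fun i => q i ≠ 0).card = k}.Infinite := by
  by_contra! h
  refine (hA.sdiff (Set.finite_singleton 0))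
    (((Finset.Icc 1 n).finite_toSet.biUnion fun k hk => h k hk).subset ?_)
  rintro q ⟨hqA, hq0⟩
  obtain ⟨i, hi⟩ := Function.ne_iff.1 hq0
  refine Set.mem_biUnion (Finset.mem_Icc.2 ⟨Finset.card_pos.2 ⟨i, by simpa using hi⟩, ?_⟩)
    ⟨hqA, rfl⟩
  simpa using Finset.card_filter_le Finset.univ fun i => q i ≠ 0

theorem gammaK_nonneg (y : Fin n → ℝ) (k : ℕ) : 0 ≤ gammaK y k :=
  le_sSup (Set.mem_insert _ _)

theorem HasShrinkingVectors.coe_le_gammaK {k : ℕ} {c : ℝ} (hc : 0 < c)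
    (h : HasShrinkingVectors y k c) : (c : EReal) ≤ gammaK y k :=
  le_sSup (Set.mem_insert_of_mem _ ⟨c, rfl, hc, h⟩)

theorem exists_hasShrinkingVectors_of_coe_lt_gammaK {k : ℕ} {x : ℝ} (hx : 0 ≤ x)
    (h : (x : EReal) < gammaK y k) : ∃ c, x < c ∧ HasShrinkingVectors y k c := by
  obtain ⟨w, hw, hxw⟩ := lt_sSup_iff.1 h
  rcases hw with rfl | ⟨c, rfl, -, hc⟩
  · exact absurd hxw (not_lt.2 (EReal.coe_nonneg.2 hx))
  · exact ⟨c, EReal.coe_lt_coe_iff.1 hxw, hc⟩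

theorem exists_coe_le_omegaOfGammaK (hn : 0 < n) {v : ℝ} (hv : (approxSet y v).Infinite) :
    ∃ k ∈ Finset.Icc 1 n, (v : EReal) ≤ omegaOfGammaK n k (gammaK y k) := by
  rcases le_or_gt v n with hvn | hvn
  · refine ⟨1, Finset.mem_Icc.2 ⟨le_rfl, hn⟩, (EReal.coe_le_coe_iff.2 hvn).trans ?_⟩
    rw [coe_le_omegaOfGammaK_iff hn one_pos (gammaK_nonneg y 1) le_rfl]
    simpa [gammaOfOmega] using gammaK_nonneg y 1
  obtain ⟨k, hk, hinf⟩ := exists_infinite_card_support_eq hv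
  have hk1 := (Finset.mem_Icc.1 hk).1
  have hc := gammaOfOmega_pos (k := k) hn hvn
  refine ⟨k, hk, (coe_le_omegaOfGammaK_iff hn hk1 (gammaK_nonneg y k) hvn.le).2 ?_⟩
  exact (hasShrinkingVectors_of_infinite hn hk1 hc (mul_gammaOfOmega_lt_one hn hvn.le)
    (omegaOfGamma_gammaOfOmega hn hvn.le).le hinf).coe_le_gammaK hc

theorem approxSet_infinite_of_coe_lt_omegaOfGammaK (hn : 0 < n) {k : ℕ} (hk : 1 ≤ k) {v : ℝ}
    (hv : (v : EReal) < omegaOfGammaK n k (gammaK y k)) : (approxSet y v).Infinite := by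
  by_cases hy : HasIntegerRelation y
  · exact hy.approxSet_infinite v
  rcases le_or_gt v n with hvn | hvn
  · exact approxSet_infinite_of_le hn hy hvn
  have hγv := gammaOfOmega_nonneg (k := k) hvn.le
  obtain ⟨c, hvc, hc⟩ := exists_hasShrinkingVectors_of_coe_lt_gammaK hγv
    ((coe_lt_omegaOfGammaK_iff hn hk (gammaK_nonneg y k) hvn.le).1 hv)
  have hc0 := hγv.trans_lt hvc
  exact hc.approxSet_infinite hn hy hk hc0
    ((lt_omegaOfGamma_iff hn (hc.mul_lt_one hy hk hc0) hvn.le).2 hvc)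

end

theorem stmt9 (n : ℕ) (hn : 1 ≤ n) (y : Fin n → ℝ) :
    omegaT y = (Finset.Icc 1 n).sup' (Finset.nonempty_Icc.mpr hn) (fun k =>
      if gammaK y k < (((1 : ℝ) / (k : ℝ) : ℝ) : EReal) then
        (((n + n * (gammaK y k).toReal) / (1 - k * (gammaK y k).toReal) : ℝ) : EReal)
      else ⊤) := by
  change omegaT y = (Finset.Icc 1 n).sup' _ fun k => omegaOfGammaK n k (gammaK y k)
  apply le_antisymm
  · refine sSup_le ?_
    rintro _ ⟨v, rfl, hv⟩
    obtain ⟨k, hk, hvk⟩ := exists_coe_le_omegaOfGammaK hn hv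
    exact hvk.trans (Finset.le_sup' (fun k => omegaOfGammaK n k (gammaK y k)) hk)
  · refine Finset.sup'_le _ _ fun k hk => EReal.ge_of_forall_gt_iff_ge.1 fun v hv => ?_
    exact le_sSup ⟨v, rfl,
      approxSet_infinite_of_coe_lt_omegaOfGammaK hn (Finset.mem_Icc.1 hk).1 hv⟩
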